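/- arXiv:1503.07627 — 2 statements merged into one kernel-verified Lean document; each statement's English description precedes it below -/
import Mathlib

section
/- Let L be a countable first-order language, let (A_n)_{n∈ℕ} be a sequence of finite L-structures, and let μ_{A_n} be the unique Borel probability measure on the Stone space S of the Lindenbaum–Tarski algebra B(L) with μ_{A_n}(K([φ])) = ⟨φ,A_n⟩ for every first-order formula φ. Then (A_n) is FO-convergent if and only if the measures μ_{A_n} converge weakly to some Borel probability measure μ on S, and in that case μ(K([φ])) = lim_{n→∞} ⟨φ,A_n⟩ for every first-order formula φ. -/
/-
Every element of `B` is the class of a formula with finitely many free variables, so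
FO-convergence says exactly that `μ n (K b)` converges for every `b : B`. Basic clopen sets have
empty frontier, so weak convergence implies this. Conversely, the probability measures on the
compact metrizable Stone space form a compact space, so `μ` has a cluster point `ν`, which must
agree with the limits on the basic clopen sets. These form a π-system containing arbitrarily small
neighbourhoods of every point, and convergence on such a π-system implies weak convergence.
-/

open Filter Topology

/-- The Stone space of a Boolean algebra: the space of Boolean-algebra homomorphisms to the
two-element Boolean algebra, as a subspace of the product space `B → Bool`. -/
def StoneSpace (B : Type*) [BooleanAlgebra B] : Type _ :=
  {f : B → Bool // f ⊤ = true ∧ f ⊥ = false ∧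
    (∀ a b, f (a ⊔ b) = (f a || f b)) ∧ (∀ a b, f (a ⊓ b) = (f a && f b))}

instance (B : Type*) [BooleanAlgebra B] : TopologicalSpace (StoneSpace B) :=
  instTopologicalSpaceSubtype

noncomputable instance (B : Type*) [BooleanAlgebra B] : MeasurableSpace (StoneSpace B) :=
  borel (StoneSpace B)

instance (B : Type*) [BooleanAlgebra B] : BorelSpace (StoneSpace B) := ⟨rfl⟩

/-- the basic clopen set of the Stone space associated to an element of the Boolean
algebra -/
def stoneClopen {B : Type*} [BooleanAlgebra B] (b : B) : Set (StoneSpace B) :=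
  {h | h.1 b = true}

open FirstOrder

/-- Stone pairing of a first-order formula with a finite structure -/
noncomputable def stonePairing (L : FirstOrder.Language) (A : Type*) [L.Structure A] {p : ℕ}
    (φ : L.Formula (Fin p)) : ℝ :=
  (Nat.card {v : Fin p → A // φ.Realize v} : ℝ) / (Nat.card A : ℝ) ^ p

/-- logical equivalence of formulas with free variables among x₀, x₁, …: in every
L-structure they are satisfied by exactly the same assignments -/
def LogEquiv {L : FirstOrder.Language} (φ ψ : L.Formula ℕ) : Prop :=
  ∀ (M : Type) [L.Structure M] (v : ℕ → M), φ.Realize v ↔ ψ.Realize v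

/-- `q` presents `B` as the Lindenbaum–Tarski algebra of the language `L`: it is a
surjection from formulas onto `B` identifying exactly the logically equivalent formulas
and mapping the logical connectives to the Boolean operations. -/
structure IsLindenbaumTarski (L : FirstOrder.Language) (B : Type*) [BooleanAlgebra B]
    (q : L.Formula ℕ → B) : Prop where
  surj : Function.Surjective q
  eq_iff : ∀ φ ψ, q φ = q ψ ↔ LogEquiv φ ψ
  map_inf : ∀ φ ψ, q (φ ⊓ ψ) = q φ ⊓ q ψ
  map_sup : ∀ φ ψ, q (φ ⊔ ψ) = q φ ⊔ q ψ
  map_not : ∀ φ, q φ.not = (q φ)ᶜ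
  map_top : q ⊤ = ⊤
  map_bot : q ⊥ = ⊥

/-- weak convergence of a sequence of Borel probability measures: convergence of the
integrals of every bounded continuous real function -/
def WeaklyConvergesTo {X : Type*} [TopologicalSpace X] [MeasurableSpace X]
    (μ : ℕ → MeasureTheory.ProbabilityMeasure X) (ν : MeasureTheory.ProbabilityMeasure X) :
    Prop :=
  ∀ g : BoundedContinuousFunction X ℝ,
    Tendsto (fun n => ∫ x, g x ∂(μ n : MeasureTheory.Measure X)) atTop
      (𝓝 (∫ x, g x ∂(ν : MeasureTheory.Measure X)))

open TopologicalSpace MeasureTheory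
open scoped NNReal

namespace StoneSpace

variable {B : Type*} [BooleanAlgebra B]

lemma apply_compl (h : StoneSpace B) (b : B) : h.1 bᶜ = !h.1 b := by
  obtain ⟨f, htop, hbot, hsup, hinf⟩ := h
  have hor : (f b || f bᶜ) = true := by rw [← hsup, sup_compl_eq_top, htop]
  have hand : (f b && f bᶜ) = false := by rw [← hinf, inf_compl_eq_bot, hbot]
  cases hb : f b <;> cases hc : f bᶜ <;> simp_all

lemma isClosed_setOf_isBoolHom :
    IsClosed {f : B → Bool | f ⊤ = true ∧ f ⊥ = false ∧
      (∀ a b, f (a ⊔ b) = (f a || f b)) ∧ (∀ a b, f (a ⊓ b) = (f a && f b))} := by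
  have hpair (op : Bool → Bool → Bool) (a b : B) : Continuous fun f : B → Bool => op (f a) (f b) :=
    (continuous_of_discreteTopology (f := fun p : Bool × Bool => op p.1 p.2)).comp
      (f := fun f : B → Bool => (f a, f b)) ((continuous_apply a).prodMk (continuous_apply b))
  simp only [Set.ofPred_and, Set.ofPred_forall]
  refine (isClosed_eq (continuous_apply _) continuous_const).inter
    ((isClosed_eq (continuous_apply _) continuous_const).inter
      ((isClosed_iInter fun a => isClosed_iInter fun b => ?_).inter
        (isClosed_iInter fun a => isClosed_iInter fun b => ?_)))
  · exact isClosed_eq (continuous_apply _) (hpair (· || ·) a b)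
  · exact isClosed_eq (continuous_apply _) (hpair (· && ·) a b)

instance : CompactSpace (StoneSpace B) :=
  isCompact_iff_compactSpace.mp isClosed_setOf_isBoolHom.isCompact

instance : T2Space (StoneSpace B) :=
  inferInstanceAs (T2Space (Subtype _))

instance [Countable B] : SecondCountableTopology (StoneSpace B) :=
  Topology.IsEmbedding.subtypeVal.secondCountableTopology

instance [Countable B] : MetrizableSpace (StoneSpace B) :=
  Topology.IsEmbedding.subtypeVal.metrizableSpace

lemma stoneClopen_inf (a b : B) : stoneClopen (a ⊓ b) = stoneClopen a ∩ stoneClopen b := by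
  ext h
  simp [stoneClopen, h.2.2.2.2]

lemma isClopen_stoneClopen (b : B) : IsClopen (stoneClopen b) :=
  (isClopen_discrete {true}).preimage ((continuous_apply b).comp continuous_subtype_val)

lemma isPiSystem_range_stoneClopen : IsPiSystem (Set.range (stoneClopen (B := B))) := by
  rintro _ ⟨a, rfl⟩ _ ⟨b, rfl⟩ -
  exact ⟨a ⊓ b, stoneClopen_inf a b⟩

lemma apply_finsetInf_eq_true {ι : Type*} (h : StoneSpace B) (I : Finset ι) (g : ι → B) :
    h.1 (I.inf g) = true ↔ ∀ i ∈ I, h.1 (g i) = true := by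
  classical
  induction I using Finset.induction with
  | empty => simp [h.2.1]
  | insert i I _ ih => simp [h.2.2.2.2, ih]

def literal (x : StoneSpace B) (a : B) : B := if x.1 a then a else aᶜ

lemma apply_literal_eq_true (h x : StoneSpace B) (a : B) :
    h.1 (literal x a) = true ↔ h.1 a = x.1 a := by
  unfold literal
  cases x.1 a <;> simp [apply_compl]

lemma exists_stoneClopen_mem_nhds_subset {u : Set (StoneSpace B)} (hu : IsOpen u)
    {x : StoneSpace B} (hx : x ∈ u) : ∃ b, stoneClopen b ∈ 𝓝 x ∧ stoneClopen b ⊆ u := by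
  obtain ⟨V, hV, rfl⟩ := isOpen_induced_iff.mp hu
  obtain ⟨I, w, hw, hIV⟩ := isOpen_pi_iff.mp hV x.1 hx
  have hmem (h : StoneSpace B) :
      h ∈ stoneClopen (I.inf (literal x)) ↔ ∀ a ∈ I, h.1 a = x.1 a := by
    simp only [stoneClopen, Set.mem_ofPred_eq, apply_finsetInf_eq_true, apply_literal_eq_true]
  refine ⟨I.inf (literal x), (isClopen_stoneClopen _).isOpen.mem_nhds ((hmem x).2 fun _ _ => rfl),
    fun h hh => hIV fun a ha => ?_⟩
  rw [(hmem h).1 hh a ha]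
  exact (hw a ha).2

end StoneSpace

namespace MeasureTheory.ProbabilityMeasure

variable {X ι : Type*} [TopologicalSpace X] [MeasurableSpace X]

lemma eq_of_mapClusterPt_of_tendsto_measure [OpensMeasurableSpace X] [PseudoMetrizableSpace X]
    {l : Filter ι} {μ : ι → ProbabilityMeasure X} {ν : ProbabilityMeasure X}
    (hν : MapClusterPt ν l μ) {s : Set X} (hs : IsClopen s) {r : ℝ≥0}
    (hr : Tendsto (fun i => μ i s) l (𝓝 r)) :
    ν s = r := by
  have hcont : Tendsto (fun ρ : ProbabilityMeasure X => ρ s) (𝓝 ν) (𝓝 (ν s)) :=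
    tendsto_measure_of_isClopen_of_tendsto tendsto_id hs
  have hνs : MapClusterPt (ν s) l (fun i => μ i s) := hν.tendsto_comp hcont
  exact eq_of_nhds_neBot (hνs.neBot.mono (inf_le_inf_left _ hr))

theorem exists_tendsto_of_isPiSystem_of_isClopen [BorelSpace X] [CompactSpace X]
    [SecondCountableTopology X] [MetrizableSpace X]
    {l : Filter ι} [l.NeBot] [l.IsCountablyGenerated]
    {S : Set (Set X)} (hS : IsPiSystem S) (hclopen : ∀ s ∈ S, IsClopen s)
    (hbasis : ∀ u, IsOpen u → ∀ x ∈ u, ∃ s ∈ S, s ∈ 𝓝 x ∧ s ⊆ u)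
    {μ : ι → ProbabilityMeasure X} (hμ : ∀ s ∈ S, ∃ r, Tendsto (fun i => μ i s) l (𝓝 r)) :
    ∃ ν, Tendsto μ l (𝓝 ν) := by
  obtain ⟨ν, hν⟩ := exists_clusterPt_of_compactSpace (Filter.map μ l)
  refine ⟨ν, hS.tendsto_probabilityMeasure_of_tendsto_of_mem
    (fun s hs => (hclopen s hs).isOpen.measurableSet) hbasis fun s hs => ?_⟩
  obtain ⟨r, hr⟩ := hμ s hs
  rwa [eq_of_mapClusterPt_of_tendsto_measure hν (hclopen s hs) hr]

end MeasureTheory.ProbabilityMeasure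

theorem StoneSpace.exists_tendsto_of_tendsto_measure_stoneClopen {B ι : Type*} [BooleanAlgebra B]
    [Countable B] {l : Filter ι} [l.NeBot] [l.IsCountablyGenerated]
    {μ : ι → ProbabilityMeasure (StoneSpace B)}
    (hμ : ∀ b, ∃ r, Tendsto (fun i => μ i (stoneClopen b)) l (𝓝 r)) :
    ∃ ν, Tendsto μ l (𝓝 ν) := by
  refine ProbabilityMeasure.exists_tendsto_of_isPiSystem_of_isClopen
    isPiSystem_range_stoneClopen ?_ (fun u hu x hx => ?_) ?_
  · rintro _ ⟨b, rfl⟩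
    exact isClopen_stoneClopen b
  · obtain ⟨b, hb⟩ := exists_stoneClopen_mem_nhds_subset hu hx
    exact ⟨_, ⟨b, rfl⟩, hb⟩
  · rintro _ ⟨b, rfl⟩
    exact hμ b

namespace FirstOrder.Language

variable {L : Language}

lemma Formula.exists_logEquiv_relabel_finVal (ψ : L.Formula ℕ) :
    ∃ (p : ℕ) (φ : L.Formula (Fin p)), LogEquiv (φ.relabel Fin.val) ψ := by
  classical
  have hlt (n : ℕ) (hn : n ∈ ψ.freeVarFinset) : n < ψ.freeVarFinset.sup id + 1 :=
    Nat.lt_succ_of_le (Finset.le_sup (f := id) hn)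
  refine ⟨_, Formula.relabel (fun n => ⟨n.1, hlt n.1 n.2⟩)
    (ψ.restrictFreeVar (Set.inclusion subset_rfl)), fun M _ v => ?_⟩
  rw [Formula.realize_relabel, Formula.realize_relabel]
  exact BoundedFormula.realize_restrictFreeVar' subset_rfl

end FirstOrder.Language

lemma IsLindenbaumTarski.exists_relabel_finVal_eq {B : Type*} [BooleanAlgebra B]
    {L : FirstOrder.Language} {q : L.Formula ℕ → B} (hq : IsLindenbaumTarski L B q) (b : B) :
    ∃ (p : ℕ) (φ : L.Formula (Fin p)), q (φ.relabel Fin.val) = b := by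
  obtain ⟨ψ, rfl⟩ := hq.surj b
  obtain ⟨p, φ, hφ⟩ := ψ.exists_logEquiv_relabel_finVal
  exact ⟨p, φ, (hq.eq_iff _ _).2 hφ⟩

lemma weaklyConvergesTo_iff_tendsto {X : Type*} [TopologicalSpace X] [MeasurableSpace X]
    [OpensMeasurableSpace X] {μ : ℕ → ProbabilityMeasure X} {ν : ProbabilityMeasure X} :
    WeaklyConvergesTo μ ν ↔ Tendsto μ atTop (𝓝 ν) :=
  ProbabilityMeasure.tendsto_iff_forall_integral_tendsto.symm

theorem stmt3_general (L : FirstOrder.Language)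
    (B : Type) [BooleanAlgebra B] [Countable B]
    (q : L.Formula ℕ → B) (hq : IsLindenbaumTarski L B q)
    (A : ℕ → Type) [∀ n, L.Structure (A n)]
    (μ : ℕ → MeasureTheory.ProbabilityMeasure (StoneSpace B))
    (hμ : ∀ (n : ℕ) (p : ℕ) (φ : L.Formula (Fin p)),
      ((μ n : MeasureTheory.Measure (StoneSpace B))
        (stoneClopen (q (φ.relabel (Fin.val : Fin p → ℕ))))).toReal
        = stonePairing L (A n) φ) :
    ((∀ (p : ℕ) (φ : L.Formula (Fin p)),
        ∃ r : ℝ, Tendsto (fun n => stonePairing L (A n) φ) atTop (𝓝 r)) ↔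
      ∃ ν : MeasureTheory.ProbabilityMeasure (StoneSpace B), WeaklyConvergesTo μ ν) ∧
    ∀ ν : MeasureTheory.ProbabilityMeasure (StoneSpace B), WeaklyConvergesTo μ ν →
      ∀ (p : ℕ) (φ : L.Formula (Fin p)),
        Tendsto (fun n => stonePairing L (A n) φ) atTop
          (𝓝 (((ν : MeasureTheory.Measure (StoneSpace B))
            (stoneClopen (q (φ.relabel (Fin.val : Fin p → ℕ))))).toReal)) := by
  have hlim (ν : ProbabilityMeasure (StoneSpace B)) (hν : WeaklyConvergesTo μ ν) (p : ℕ)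
      (φ : L.Formula (Fin p)) :
      Tendsto (fun n => stonePairing L (A n) φ) atTop
        (𝓝 ((ν : Measure (StoneSpace B)) (stoneClopen (q (φ.relabel Fin.val)))).toReal) :=
    (NNReal.tendsto_coe.2 (ProbabilityMeasure.tendsto_measure_of_isClopen_of_tendsto
      (weaklyConvergesTo_iff_tendsto.1 hν) (StoneSpace.isClopen_stoneClopen _))).congr
      fun n => hμ n p φ
  refine ⟨⟨fun hconv => ?_, fun ⟨ν, hν⟩ p φ => ⟨_, hlim ν hν p φ⟩⟩, hlim⟩
  obtain ⟨ν, hν⟩ := StoneSpace.exists_tendsto_of_tendsto_measure_stoneClopen (μ := μ) fun b => by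
    obtain ⟨p, φ, rfl⟩ := hq.exists_relabel_finVal_eq b
    obtain ⟨r, hr⟩ := hconv p φ
    have hr' : Tendsto (fun n => (μ n (stoneClopen (q (φ.relabel Fin.val))) : ℝ)) atTop (𝓝 r) :=
      hr.congr fun n => (hμ n p φ).symm
    refine ⟨r.toNNReal, ?_⟩
    simpa only [Function.comp_def, Real.toNNReal_coe] using
      (continuous_real_toNNReal.tendsto r).comp hr'
  exact ⟨ν, weaklyConvergesTo_iff_tendsto.2 hν⟩

/-- a sequence of finite structures is FO-convergent iff the associated
measures on the Stone space of the Lindenbaum–Tarski algebra converge weakly; in that case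
the limit measure of K([φ]) equals the limit of the Stone pairings ⟨φ,A_n⟩. -/
theorem stmt3 (L : FirstOrder.Language) [Countable L.Symbols]
    (B : Type) [BooleanAlgebra B] [Countable B]
    (q : L.Formula ℕ → B) (hq : IsLindenbaumTarski L B q)
    (A : ℕ → Type) [∀ n, L.Structure (A n)] [∀ n, Finite (A n)] [∀ n, Nonempty (A n)]
    (μ : ℕ → MeasureTheory.ProbabilityMeasure (StoneSpace B))
    (hμ : ∀ (n : ℕ) (p : ℕ) (φ : L.Formula (Fin p)),
      ((μ n : MeasureTheory.Measure (StoneSpace B))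
        (stoneClopen (q (φ.relabel (Fin.val : Fin p → ℕ))))).toReal
        = stonePairing L (A n) φ) :
    ((∀ (p : ℕ) (φ : L.Formula (Fin p)),
        ∃ r : ℝ, Tendsto (fun n => stonePairing L (A n) φ) atTop (𝓝 r)) ↔
      ∃ ν : MeasureTheory.ProbabilityMeasure (StoneSpace B), WeaklyConvergesTo μ ν) ∧
    ∀ ν : MeasureTheory.ProbabilityMeasure (StoneSpace B), WeaklyConvergesTo μ ν →
      ∀ (p : ℕ) (φ : L.Formula (Fin p)),
        Tendsto (fun n => stonePairing L (A n) φ) atTop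
          (𝓝 (((ν : MeasureTheory.Measure (StoneSpace B))
            (stoneClopen (q (φ.relabel (Fin.val : Fin p → ℕ))))).toReal)) :=
  stmt3_general L B q hq A μ hμ
end

section
/- Let f be a real-valued, isomorphism-invariant function on finite nonempty simple graphs which is left-continuous, i.e., (f(G_n))_n converges for every sequence (G_n) of finite nonempty simple graphs such that (t(F,G_n))_n converges for every finite simple graph F. Then for every ε > 0 there exist finite simple graphs F_1,…,F_ℓ and real numbers a_1,…,a_ℓ such that |Σ_{i=1}^ℓ a_i · t(F_i,G) − f(G)| < ε holds for every finite nonempty simple graph G. -/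
open Filter Topology

/-- homomorphism density t(F,G) -/
noncomputable def homDensity {W V : Type*} (F : SimpleGraph W) (G : SimpleGraph V) : ℝ :=
  (Nat.card (F →g G) : ℝ) / (Nat.card V : ℝ) ^ (Nat.card W)

/-!
Send a nonempty finite graph `G` to its profile `(t(F, G))_F` in `[0, 1]` to the power of the
countable set of finite graphs `F`; the closure `X` of all profiles is compact and first countable.
Left-continuity says that `f` converges along every sequence of graphs whose profiles converge;
interleaving two such sequences shows that the limit depends only on the limit profile, so `f`
factors through a continuous function `g` on `X`. Since `t(F₁ ⊔ F₂, G) = t(F₁, G) t(F₂, G)` and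
the empty graph has density `1`, the linear span of the coordinate functions of `X` is a
point-separating subalgebra of `C(X, ℝ)`, and Stone–Weierstrass approximates `g` uniformly by
such a span element, i.e. by a linear combination of homomorphism densities.
-/

open Set
open scoped Pointwise

theorem Filter.Tendsto.interleave {α : Type*} {l : Filter α} {u v : ℕ → α}
    (hu : Tendsto u atTop l) (hv : Tendsto v atTop l) :
    Tendsto (fun k => if Even k then u (k / 2) else v (k / 2)) atTop l :=
  have hdiv := Nat.tendsto_div_const_atTop two_ne_zero
  ((hu.comp hdiv).mono_left inf_le_left).if ((hv.comp hdiv).mono_left inf_le_left)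

section SequentialExtension

variable {S T γ : Type*} [TopologicalSpace T] [TopologicalSpace γ] {φ : S → T} {h : S → γ}

theorem eq_of_tendsto_of_forall_seq_tendsto [T2Space γ]
    (H : ∀ (s : ℕ → S) (x : T), Tendsto (φ ∘ s) atTop (𝓝 x) → ∃ c, Tendsto (h ∘ s) atTop (𝓝 c))
    {s s' : ℕ → S} {x : T} {c c' : γ}
    (hs : Tendsto (φ ∘ s) atTop (𝓝 x)) (hs' : Tendsto (φ ∘ s') atTop (𝓝 x))
    (hc : Tendsto (h ∘ s) atTop (𝓝 c)) (hc' : Tendsto (h ∘ s') atTop (𝓝 c')) : c = c' := by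
  set u : ℕ → S := fun k => if Even k then s (k / 2) else s' (k / 2)
  have hφu : φ ∘ u = fun k => if Even k then (φ ∘ s) (k / 2) else (φ ∘ s') (k / 2) := by
    funext k; simp only [u, Function.comp_apply, apply_ite φ]
  obtain ⟨ρ, hρ⟩ := H u x (hφu ▸ hs.interleave hs')
  have heven : h ∘ u ∘ (2 * ·) = h ∘ s := funext fun k => by simp [u]
  have hodd : h ∘ u ∘ (2 * · + 1) = h ∘ s' := funext fun k => by
    have hk : (2 * k + 1) / 2 = k := by omega
    simp [u, hk]
  have h2 : Tendsto (2 * · : ℕ → ℕ) atTop atTop :=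
    (strictMono_mul_left_of_pos two_pos).tendsto_atTop
  have h2' : Tendsto (2 * · + 1 : ℕ → ℕ) atTop atTop := (tendsto_add_atTop_nat 1).comp h2
  rw [tendsto_nhds_unique hc (heven ▸ hρ.comp h2), tendsto_nhds_unique hc' (hodd ▸ hρ.comp h2')]

theorem exists_tendsto_comap_of_forall_seq_tendsto [T2Space γ] [FirstCountableTopology T]
    (H : ∀ (s : ℕ → S) (x : T), Tendsto (φ ∘ s) atTop (𝓝 x) → ∃ c, Tendsto (h ∘ s) atTop (𝓝 c))
    {x : T} (hx : x ∈ closure (range φ)) : ∃ c, Tendsto h (comap φ (𝓝 x)) (𝓝 c) := by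
  obtain ⟨v, hv, hvx⟩ := mem_closure_iff_seq_limit.mp hx
  choose s hs using hv
  have hφs : Tendsto (φ ∘ s) atTop (𝓝 x) := by simpa [Function.comp_def, hs] using hvx
  obtain ⟨c, hc⟩ := H s x hφs
  refine ⟨c, tendsto_of_seq_tendsto fun s' hs' => ?_⟩
  have hφs' : Tendsto (φ ∘ s') atTop (𝓝 x) := tendsto_comap_iff.mp hs'
  obtain ⟨c', hc'⟩ := H s' x hφs'
  rwa [eq_of_tendsto_of_forall_seq_tendsto H hφs hφs' hc hc']

theorem exists_continuousMap_closure_range_of_forall_seq_tendsto [T3Space γ]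
    [FirstCountableTopology T]
    (H : ∀ (s : ℕ → S) (x : T), Tendsto (φ ∘ s) atTop (𝓝 x) → ∃ c, Tendsto (h ∘ s) atTop (𝓝 c)) :
    ∃ g : C(closure (range φ), γ), ∀ a, g ⟨φ a, subset_closure (mem_range_self a)⟩ = h a := by
  set ψ : S → closure (range φ) := fun a => ⟨φ a, subset_closure (mem_range_self a)⟩
  -- pulling the topology back along `ψ` puts us in the setting of `IsDenseInducing.extend`
  let : TopologicalSpace S := .induced ψ inferInstance
  have hψ : IsDenseInducing ψ := by
    refine ⟨⟨rfl⟩, Subtype.dense_iff.mpr ?_⟩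
    rw [← range_comp]
    rfl
  have hlim : ∀ y, ∃ c, Tendsto h (comap ψ (𝓝 y)) (𝓝 c) := fun y => by
    rw [nhds_subtype, comap_comap]
    exact exists_tendsto_comap_of_forall_seq_tendsto H y.2
  exact ⟨⟨hψ.extend h, hψ.continuous_extend hlim⟩, hψ.extend_eq' hlim⟩

end SequentialExtension

namespace SimpleGraph

variable {W W' V : Type*}

def sumHomEquiv (F : SimpleGraph W) (F' : SimpleGraph W') (G : SimpleGraph V) :
    (F ⊕g F' →g G) ≃ (F →g G) × (F' →g G) where
  toFun h := (h.comp Embedding.sumInl.toHom, h.comp Embedding.sumInr.toHom)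
  invFun p := ⟨Sum.elim p.1 p.2, fun {x y} hxy => by
    cases x <;> cases y <;> simp_all [p.1.map_adj, p.2.map_adj]⟩
  left_inv h := by ext x; cases x <;> rfl
  right_inv p := rfl

end SimpleGraph

open SimpleGraph

section HomDensity

variable {W W' V V' : Type*}

theorem homDensity_congr {F : SimpleGraph W} {F' : SimpleGraph W'} {G : SimpleGraph V}
    {G' : SimpleGraph V'} (e : F ≃g F') (e' : G ≃g G') : homDensity F G = homDensity F' G' := by
  rw [homDensity, homDensity, Nat.card_congr (e.homCongr e'), Nat.card_congr e.toEquiv,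
    Nat.card_congr e'.toEquiv]

theorem homDensity_nonneg (F : SimpleGraph W) (G : SimpleGraph V) : 0 ≤ homDensity F G := by
  unfold homDensity; positivity

theorem homDensity_le_one [Finite W] [Finite V] [Nonempty V] (F : SimpleGraph W)
    (G : SimpleGraph V) : homDensity F G ≤ 1 := by
  have hcard : Nat.card (F →g G) ≤ Nat.card V ^ Nat.card W := by
    rw [← Nat.card_fun]
    exact Nat.card_le_card_of_injective _ DFunLike.coe_injective
  rw [homDensity, div_le_one (by have := Nat.card_pos (α := V); positivity)]
  exact_mod_cast hcard

theorem homDensity_sum [Finite W] [Finite W'] (F : SimpleGraph W) (F' : SimpleGraph W')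
    (G : SimpleGraph V) : homDensity (F ⊕g F') G = homDensity F G * homDensity F' G := by
  rw [homDensity, homDensity, homDensity, Nat.card_congr (sumHomEquiv F F' G), Nat.card_prod,
    Nat.card_sum, pow_add, Nat.cast_mul, div_mul_div_comm]

theorem homDensity_of_isEmpty [IsEmpty W] (F : SimpleGraph W) (G : SimpleGraph V) :
    homDensity F G = 1 := by
  simp [homDensity]

end HomDensity

abbrev FinGraph : Type := Σ n : ℕ, SimpleGraph (Fin n)

abbrev NonemptyFinGraph : Type := Σ n : ℕ, SimpleGraph (Fin (n + 1))

namespace FinGraph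

def empty : FinGraph := ⟨0, ⊥⟩

def disjUnion (F₁ F₂ : FinGraph) : FinGraph :=
  ⟨F₁.1 + F₂.1, (F₁.2 ⊕g F₂.2).map finSumFinEquiv.toEmbedding⟩

theorem homDensity_empty {V : Type*} (G : SimpleGraph V) : homDensity empty.2 G = 1 :=
  homDensity_of_isEmpty (⊥ : SimpleGraph (Fin 0)) G

theorem homDensity_disjUnion (F₁ F₂ : FinGraph) {V : Type*} (G : SimpleGraph V) :
    homDensity (F₁.disjUnion F₂).2 G = homDensity F₁.2 G * homDensity F₂.2 G :=
  (homDensity_congr (Iso.map _ _) Iso.refl).symm.trans (homDensity_sum F₁.2 F₂.2 G)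

theorem exists_iso {W : Type*} [Finite W] (F : SimpleGraph W) :
    ∃ F' : FinGraph, Nonempty (F ≃g F'.2) :=
  ⟨⟨_, F.map (Finite.equivFin W).toEmbedding⟩, ⟨Iso.map _ F⟩⟩

end FinGraph

theorem NonemptyFinGraph.exists_iso {V : Type*} [Finite V] [Nonempty V] (G : SimpleGraph V) :
    ∃ G' : NonemptyFinGraph, Nonempty (G ≃g G'.2) := by
  have hcard : Nat.card V = Nat.card V - 1 + 1 := (Nat.succ_pred_eq_of_pos Nat.card_pos).symm
  exact ⟨⟨_, G.map ((Finite.equivFin V).trans (finCongr hcard)).toEmbedding⟩, ⟨Iso.map _ G⟩⟩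

noncomputable def densityProfile {V : Type*} (G : SimpleGraph V) (F : FinGraph) : ℝ :=
  homDensity F.2 G

theorem densityProfile_congr {V V' : Type*} {G : SimpleGraph V} {G' : SimpleGraph V'}
    (e : G ≃g G') : densityProfile G = densityProfile G' :=
  funext fun _ => homDensity_congr Iso.refl e

theorem exists_tendsto_homDensity_of_tendsto_densityProfile {ι : Type*} {l : Filter ι}
    {V : ι → Type*} {G : ∀ i, SimpleGraph (V i)} {x : FinGraph → ℝ}
    (hG : Tendsto (fun i => densityProfile (G i)) l (𝓝 x)) {W : Type*} [Finite W]
    (F : SimpleGraph W) : ∃ r, Tendsto (fun i => homDensity F (G i)) l (𝓝 r) := by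
  obtain ⟨F', ⟨e⟩⟩ := FinGraph.exists_iso F
  refine ⟨x F', ?_⟩
  simp_rw [homDensity_congr e Iso.refl]
  exact tendsto_pi_nhds.mp hG F'

def profileSpace : Set (FinGraph → ℝ) :=
  closure (range fun G : NonemptyFinGraph => densityProfile G.2)

theorem isCompact_profileSpace : IsCompact profileSpace := by
  refine (isCompact_univ_pi fun _ => isCompact_Icc (a := (0 : ℝ)) (b := 1)).of_isClosed_subset
    isClosed_closure (closure_minimal ?_ (isClosed_set_pi fun _ _ => isClosed_Icc))
  rintro _ ⟨G, rfl⟩ F -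
  exact ⟨homDensity_nonneg _ _, homDensity_le_one _ _⟩

instance : CompactSpace profileSpace := isCompact_iff_compactSpace.mp isCompact_profileSpace

theorem apply_empty_of_mem_profileSpace {x : FinGraph → ℝ} (hx : x ∈ profileSpace) :
    x FinGraph.empty = 1 :=
  (EqOn.closure (f := fun x => x FinGraph.empty) (g := 1)
    (by rintro _ ⟨G, rfl⟩; exact FinGraph.homDensity_empty G.2) (by fun_prop) (by fun_prop)) hx

theorem apply_disjUnion_of_mem_profileSpace {x : FinGraph → ℝ} (hx : x ∈ profileSpace)
    (F₁ F₂ : FinGraph) : x (F₁.disjUnion F₂) = x F₁ * x F₂ :=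
  (EqOn.closure (f := fun x => x (F₁.disjUnion F₂)) (g := fun x => x F₁ * x F₂)
    (by rintro _ ⟨G, rfl⟩; exact FinGraph.homDensity_disjUnion F₁ F₂ G.2)
    (by fun_prop) (by fun_prop)) hx

def profileCoord (F : FinGraph) : C(profileSpace, ℝ) :=
  ⟨fun x => x.1 F, (continuous_apply F).comp continuous_subtype_val⟩

theorem profileCoord_empty : profileCoord FinGraph.empty = 1 :=
  ContinuousMap.ext fun x => apply_empty_of_mem_profileSpace x.2

theorem profileCoord_mul (F₁ F₂ : FinGraph) :
    profileCoord F₁ * profileCoord F₂ = profileCoord (F₁.disjUnion F₂) :=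
  ContinuousMap.ext fun x => (apply_disjUnion_of_mem_profileSpace x.2 F₁ F₂).symm

theorem range_profileCoord_mul_subset :
    range profileCoord * range profileCoord ⊆ range profileCoord := by
  rintro _ ⟨_, ⟨F₁, rfl⟩, _, ⟨F₂, rfl⟩, rfl⟩
  exact ⟨_, (profileCoord_mul F₁ F₂).symm⟩

def densityAlgebra : Subalgebra ℝ C(profileSpace, ℝ) :=
  (Submodule.span ℝ (range profileCoord)).toSubalgebra
    (profileCoord_empty ▸ Submodule.subset_span (mem_range_self _))
    fun _ _ hp hq => by
      have hpq := Submodule.mul_mem_mul hp hq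
      rw [Submodule.span_mul_span] at hpq
      exact Submodule.span_mono range_profileCoord_mul_subset hpq

theorem densityAlgebra_separatesPoints : densityAlgebra.SeparatesPoints := by
  intro x y hxy
  obtain ⟨F, hF⟩ := Function.ne_iff.mp (Subtype.coe_ne_coe.mpr hxy)
  exact ⟨_, ⟨_, Submodule.subset_span (mem_range_self F), rfl⟩, hF⟩

theorem exists_sum_of_mem_densityAlgebra {p : C(profileSpace, ℝ)} (hp : p ∈ densityAlgebra) :
    ∃ (n : ℕ) (a : Fin n → ℝ) (F : Fin n → FinGraph), ∀ x, p x = ∑ i, a i * x.1 (F i) := by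
  obtain ⟨n, a, q, rfl⟩ := Submodule.mem_span_set'.mp hp
  choose F hF using fun i => (q i).2
  refine ⟨n, a, F, fun x => ?_⟩
  simp [← hF, profileCoord]

/-- every left-continuous isomorphism-invariant graph parameter can be
uniformly approximated by finite linear combinations of homomorphism densities. -/
theorem stmt13 (f : ∀ (U : Type), SimpleGraph U → ℝ)
    (hinv : ∀ (U U' : Type) (G : SimpleGraph U) (G' : SimpleGraph U'),
      Nonempty (G ≃g G') → f U G = f U' G')
    (hcont : ∀ (V : ℕ → Type) (_ : ∀ n, Finite (V n)) (_ : ∀ n, Nonempty (V n))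
      (G : ∀ n, SimpleGraph (V n)),
      (∀ (W : Type) (_ : Finite W) (F : SimpleGraph W),
        ∃ r : ℝ, Tendsto (fun n => homDensity F (G n)) atTop (𝓝 r)) →
      ∃ r : ℝ, Tendsto (fun n => f (V n) (G n)) atTop (𝓝 r)) :
    ∀ ε : ℝ, 0 < ε →
      ∃ (ℓ : ℕ) (W : Fin ℓ → Type) (_ : ∀ i, Finite (W i))
        (F : ∀ i, SimpleGraph (W i)) (a : Fin ℓ → ℝ),
        ∀ (U : Type) [Finite U] [Nonempty U] (G : SimpleGraph U),
          |(∑ i, a i * homDensity (F i) G) - f U G| < ε := by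
  intro ε hε
  obtain ⟨g, hg⟩ := exists_continuousMap_closure_range_of_forall_seq_tendsto
    (φ := fun G : NonemptyFinGraph => densityProfile G.2) (h := fun G => f _ G.2)
    fun s _ hs => hcont _ (fun _ => inferInstance) (fun _ => inferInstance) _
      fun _ _ F => exists_tendsto_homDensity_of_tendsto_densityProfile hs F
  obtain ⟨⟨p, hp⟩, hpg⟩ := ContinuousMap.exists_mem_subalgebra_near_continuous_of_separatesPoints
    densityAlgebra densityAlgebra_separatesPoints g g.continuous ε hε
  obtain ⟨n, a, F, hpF⟩ := exists_sum_of_mem_densityAlgebra hp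
  refine ⟨n, fun i => Fin (F i).1, fun _ => inferInstance, fun i => (F i).2, a, fun U _ _ G => ?_⟩
  obtain ⟨G', ⟨e⟩⟩ := NonemptyFinGraph.exists_iso G
  have hx : densityProfile G ∈ profileSpace :=
    densityProfile_congr e ▸ subset_closure (mem_range_self G')
  have hsum : ∑ i, a i * homDensity (F i).2 G = p ⟨_, hx⟩ := (hpF ⟨_, hx⟩).symm
  have hf : f U G = g ⟨_, hx⟩ := by
    rw [hinv _ _ G G'.2 ⟨e⟩, ← hg G']
    congr 2
    exact (densityProfile_congr e).symm
  rw [hsum, hf, ← Real.norm_eq_abs]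
  exact hpg _
end
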